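/- Let G be a connected graph, T a subtree of G of maximum order among trees whose stem has exactly k branch vertices, and suppose T is not spanning. Then for every vertex v ∈ V(G) \ V(T), every neighbor of v in G lies in Leaf(T) ∪ (V(G) \ V(T)). -/

import Mathlib

/-! If a non-leaf vertex `u` of `T` had a neighbour `v` outside `T`, attaching the pendant edge
`uv` would give a tree with one more vertex. Its only new leaf is `v`, and every endpoint of an
edge of `T` keeps its leaf status (`u` goes from degree `≥ 1` to `≥ 2`), so the stem, and with it
the set of branch vertices, is unchanged: this contradicts the maximality of `T`. -/

open SimpleGraph

/-- Degree of a vertex in a subgraph. -/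
noncomputable def sdeg {V : Type*} {G : SimpleGraph V} (T : G.Subgraph) (v : V) : ℕ :=
  (T.neighborSet v).ncard

/-- The leaves of a subgraph (thought of as a tree): vertices of degree one. -/
def sleaf {V : Type*} {G : SimpleGraph V} (T : G.Subgraph) : Set V :=
  {v | v ∈ T.verts ∧ sdeg T v = 1}

/-- Degree of a vertex in the stem `T - Leaf(T)`. -/
noncomputable def sstemDeg {V : Type*} {G : SimpleGraph V} (T : G.Subgraph) (w : V) : ℕ :=
  {x | T.Adj w x ∧ w ∉ sleaf T ∧ x ∉ sleaf T}.ncard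

/-- Branch vertices of the stem of `T`: stem vertices of stem-degree at least 3. -/
def sbranch {V : Type*} {G : SimpleGraph V} (T : G.Subgraph) : Set V :=
  {w | 3 ≤ sstemDeg T w}

namespace SimpleGraph.Subgraph

variable {V : Type*} {G : SimpleGraph V}

theorem isAcyclic_spanningCoe_iff {H : G.Subgraph} :
    H.spanningCoe.IsAcyclic ↔ H.coe.IsAcyclic := by
  refine ⟨fun h => h.embedding H.coeEmbeddingSpanningCoe, fun h a c hc => ?_⟩
  let c' : G.Walk a a := c.mapLe H.spanningCoe_le
  have hc' : c'.IsCycle := hc.mapLe _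
  have hle : c'.toSubgraph ≤ H := by
    refine (Walk.toSubgraph_le_iff hc'.not_nil).mpr fun e he => ?_
    simpa using c.edges_subset_edgeSet (by simpa [c'] using he)
  have hlift : (c'.mapToSubgraph.map (inclusion hle)).map H.hom = c' := by
    rw [Walk.map_map]
    exact c'.map_mapToSubgraph_hom
  exact h _ (hlift ▸ hc').of_map

theorem neighborSet_eq_empty_of_notMem_verts {H : G.Subgraph} {v : V} (hv : v ∉ H.verts) :
    H.neighborSet v = ∅ :=
  Set.eq_empty_of_forall_notMem fun _ hx => hv (H.edge_vert hx)

variable {T : G.Subgraph} {u v w : V} (huv : G.Adj u v)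

theorem verts_sup_subgraphOfAdj (hu : u ∈ T.verts) :
    (T ⊔ G.subgraphOfAdj huv).verts = insert v T.verts := by
  rw [verts_sup, subgraphOfAdj_verts, Set.union_insert, Set.union_singleton,
    Set.insert_eq_of_mem (Set.mem_insert_of_mem v hu)]

theorem isTree_sup_subgraphOfAdj (hT : T.coe.IsTree) (hu : u ∈ T.verts) (hv : v ∉ T.verts) :
    (T ⊔ G.subgraphOfAdj huv).coe.IsTree := by
  have hconn : (T ⊔ G.subgraphOfAdj huv).Connected :=
    connected_sup (Subgraph.preconnected_iff.mpr hT.connected.preconnected)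
      (subgraphOfAdj_connected huv).preconnected ⟨u, hu, by simp⟩
  have hacyc : (T.spanningCoe ⊔ edge u v).IsAcyclic :=
    (isAcyclic_spanningCoe_iff.mpr hT.isAcyclic).sup_edge_of_not_reachable
      (not_reachable_of_neighborSet_right_eq_empty huv.ne
        (neighborSet_eq_empty_of_notMem_verts hv))
  refine ⟨hconn.coe, isAcyclic_spanningCoe_iff.mp ?_⟩
  rwa [sup_spanningCoe, spanningCoe_subgraphOfAdj]

theorem neighborSet_sup_subgraphOfAdj_fst :
    (T ⊔ G.subgraphOfAdj huv).neighborSet u = insert v (T.neighborSet u) := by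
  rw [neighborSet_sup, neighborSet_fst_subgraphOfAdj, Set.union_singleton]

theorem neighborSet_sup_subgraphOfAdj_snd (hv : v ∉ T.verts) :
    (T ⊔ G.subgraphOfAdj huv).neighborSet v = {u} := by
  rw [neighborSet_sup, neighborSet_snd_subgraphOfAdj, neighborSet_eq_empty_of_notMem_verts hv,
    Set.empty_union]

theorem neighborSet_sup_subgraphOfAdj_of_ne (hwu : w ≠ u) (hwv : w ≠ v) :
    (T ⊔ G.subgraphOfAdj huv).neighborSet w = T.neighborSet w := by
  have hw : w ∉ (G.subgraphOfAdj huv).verts := by simp [hwu, hwv]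
  rw [neighborSet_sup, neighborSet_eq_empty_of_notMem_verts hw, Set.union_empty]

end SimpleGraph.Subgraph

section PendantEdge

open Subgraph

variable {V : Type*} {G : SimpleGraph V} {T : G.Subgraph} {u v a b : V} (huv : G.Adj u v)

theorem mem_sleaf_sup_subgraphOfAdj_snd (hv : v ∉ T.verts) :
    v ∈ sleaf (T ⊔ G.subgraphOfAdj huv) :=
  ⟨Or.inr (by simp), by rw [sdeg, neighborSet_sup_subgraphOfAdj_snd huv hv, Set.ncard_singleton]⟩

theorem mem_sleaf_sup_subgraphOfAdj_iff_of_ne {w : V} (hwu : w ≠ u) (hwv : w ≠ v) :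
    w ∈ sleaf (T ⊔ G.subgraphOfAdj huv) ↔ w ∈ sleaf T := by
  simp only [sleaf, sdeg, Set.mem_ofPred_eq, neighborSet_sup_subgraphOfAdj_of_ne huv hwu hwv,
    verts_sup, subgraphOfAdj_verts, Set.mem_union, Set.mem_insert_iff, Set.mem_singleton_iff,
    hwu, hwv, or_false]

theorem notMem_sleaf_sup_subgraphOfAdj_fst [Finite V] (hv : v ∉ T.verts) (hu : T.Adj u a) :
    u ∉ sleaf (T ⊔ G.subgraphOfAdj huv) := by
  intro hleaf
  have hvN : v ∉ T.neighborSet u := fun h => hv (T.edge_vert h.symm)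
  have hN : 0 < (T.neighborSet u).ncard := (Set.ncard_pos (Set.toFinite _)).mpr ⟨a, hu⟩
  have := hleaf.2
  rw [sdeg, neighborSet_sup_subgraphOfAdj_fst, Set.ncard_insert_of_notMem hvN] at this
  omega

theorem mem_sleaf_sup_subgraphOfAdj_iff_of_adj [Finite V] (hu : u ∉ sleaf T) (hv : v ∉ T.verts)
    (hab : T.Adj a b) : a ∈ sleaf (T ⊔ G.subgraphOfAdj huv) ↔ a ∈ sleaf T := by
  have hav : a ≠ v := fun h => hv (h ▸ T.edge_vert hab)
  by_cases hau : a = u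
  · subst hau
    exact iff_of_false (notMem_sleaf_sup_subgraphOfAdj_fst huv hv hab) hu
  · exact mem_sleaf_sup_subgraphOfAdj_iff_of_ne huv hau hav

theorem adj_of_adj_sup_subgraphOfAdj_of_notMem_sleaf (hv : v ∉ T.verts)
    (hab : (T ⊔ G.subgraphOfAdj huv).Adj a b) (ha : a ∉ sleaf (T ⊔ G.subgraphOfAdj huv))
    (hb : b ∉ sleaf (T ⊔ G.subgraphOfAdj huv)) : T.Adj a b := by
  have hleaf := mem_sleaf_sup_subgraphOfAdj_snd huv hv
  rcases hab with hab | hab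
  · exact hab
  · rcases Sym2.eq_iff.mp hab with ⟨-, rfl⟩ | ⟨-, rfl⟩
    · exact absurd hleaf hb
    · exact absurd hleaf ha

theorem sstemDeg_sup_subgraphOfAdj [Finite V] (hu : u ∉ sleaf T) (hv : v ∉ T.verts) (w : V) :
    sstemDeg (T ⊔ G.subgraphOfAdj huv) w = sstemDeg T w := by
  unfold sstemDeg
  congr 1
  ext x
  constructor
  · rintro ⟨hwx, hw, hx⟩
    have hT := adj_of_adj_sup_subgraphOfAdj_of_notMem_sleaf huv hv hwx hw hx
    rw [mem_sleaf_sup_subgraphOfAdj_iff_of_adj huv hu hv hT,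
      mem_sleaf_sup_subgraphOfAdj_iff_of_adj huv hu hv hT.symm] at *
    exact ⟨hT, hw, hx⟩
  · rintro ⟨hT, hw, hx⟩
    rw [← mem_sleaf_sup_subgraphOfAdj_iff_of_adj huv hu hv hT,
      ← mem_sleaf_sup_subgraphOfAdj_iff_of_adj huv hu hv hT.symm] at *
    exact ⟨Or.inl hT, hw, hx⟩

theorem sbranch_sup_subgraphOfAdj [Finite V] (hu : u ∉ sleaf T) (hv : v ∉ T.verts) :
    sbranch (T ⊔ G.subgraphOfAdj huv) = sbranch T := by
  ext w
  simp only [sbranch, Set.mem_ofPred_eq, sstemDeg_sup_subgraphOfAdj huv hu hv]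

end PendantEdge

theorem stmt11_general {V : Type*} [Fintype V] (G : SimpleGraph V) (k : ℕ)
    (T : G.Subgraph) (hT : T.coe.IsTree)
    (hk : (sbranch T).ncard = k)
    (hmax : ∀ T' : G.Subgraph, T'.coe.IsTree → (sbranch T').ncard = k →
      T'.verts.ncard ≤ T.verts.ncard) :
    ∀ v ∉ T.verts, ∀ u : V, G.Adj v u → (u ∈ sleaf T ∨ u ∉ T.verts) := by
  intro v hv u hvu
  by_contra! ⟨hu_leaf, hu⟩
  have hle := hmax _ (Subgraph.isTree_sup_subgraphOfAdj hvu.symm hT hu hv)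
    (by rw [sbranch_sup_subgraphOfAdj hvu.symm hu_leaf hv, hk])
  rw [Subgraph.verts_sup_subgraphOfAdj hvu.symm hu, Set.ncard_insert_of_notMem hv] at hle
  omega

theorem stmt11 {V : Type*} [Fintype V] (G : SimpleGraph V) (hG : G.Connected) (k : ℕ)
    (T : G.Subgraph) (hT : T.coe.IsTree)
    (hk : (sbranch T).ncard = k)
    (hmax : ∀ T' : G.Subgraph, T'.coe.IsTree → (sbranch T').ncard = k →
      T'.verts.ncard ≤ T.verts.ncard)
    (hns : T.verts ≠ Set.univ) :
    ∀ v ∉ T.verts, ∀ u : V, G.Adj v u → (u ∈ sleaf T ∨ u ∉ T.verts) :=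
  stmt11_general G k T hT hk hmax
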